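/- For every real number x with |x| ≤ log 6, one has x²/12 ≤ x·eˣ − eˣ + 1 ≤ 3x². -/

import Mathlib

private lemma deriv_f1 (x : ℝ) :
    HasDerivAt (fun x : ℝ => x * Real.exp x - Real.exp x + 1 - x ^ 2 / 12)
      (x * Real.exp x - x / 6) x := by
  have h1 : HasDerivAt (fun x : ℝ => x * Real.exp x)
      (1 * Real.exp x + x * Real.exp x) x :=
    (hasDerivAt_id x).mul (Real.hasDerivAt_exp x)
  have h3 : HasDerivAt (fun x : ℝ => x ^ 2 / 12) (2 * x / 12) x := by
    simpa using ((hasDerivAt_pow 2 x).div_const 12)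
  have := ((h1.sub (Real.hasDerivAt_exp x)).add_const 1).sub h3
  exact this.congr_deriv (by ring)

private lemma deriv_f2 (x : ℝ) :
    HasDerivAt (fun x : ℝ => 3 * x ^ 2 - (x * Real.exp x - Real.exp x + 1))
      (6 * x - x * Real.exp x) x := by
  have h1 : HasDerivAt (fun x : ℝ => x * Real.exp x)
      (1 * Real.exp x + x * Real.exp x) x :=
    (hasDerivAt_id x).mul (Real.hasDerivAt_exp x)
  have h3 : HasDerivAt (fun x : ℝ => 3 * x ^ 2) (3 * (2 * x)) x := by
    simpa using ((hasDerivAt_pow 2 x).const_mul 3)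
  have := h3.sub ((h1.sub (Real.hasDerivAt_exp x)).add_const 1)
  exact this.congr_deriv (by ring)

private lemma exp_neg_log6 : Real.exp (-Real.log 6) = 1 / 6 := by
  rw [Real.exp_neg, Real.exp_log (by norm_num : (0:ℝ) < 6)]; norm_num

theorem entropy_comparable_to_square (x : ℝ) (hx : |x| ≤ Real.log 6) :
    x ^ 2 / 12 ≤ x * Real.exp x - Real.exp x + 1 ∧
      x * Real.exp x - Real.exp x + 1 ≤ 3 * x ^ 2 := by
  obtain ⟨hxl, hxr⟩ := abs_le.mp hx
  have hlog : 0 ≤ Real.log 6 := Real.log_nonneg (by norm_num)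
  set f1 : ℝ → ℝ := fun x => x * Real.exp x - Real.exp x + 1 - x ^ 2 / 12 with hf1
  set f2 : ℝ → ℝ := fun x => 3 * x ^ 2 - (x * Real.exp x - Real.exp x + 1) with hf2
  have hc1 : Continuous f1 := by rw [hf1]; continuity
  have hc2 : Continuous f2 := by rw [hf2]; continuity
  have hd1 : ∀ y, deriv f1 y = y * Real.exp y - y / 6 := fun y => (deriv_f1 y).deriv
  have hd2 : ∀ y, deriv f2 y = 6 * y - y * Real.exp y := fun y => (deriv_f2 y).deriv
  have hdiff1 : ∀ y, DifferentiableAt ℝ f1 y := fun y => (deriv_f1 y).differentiableAt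
  have hdiff2 : ∀ y, DifferentiableAt ℝ f2 y := fun y => (deriv_f2 y).differentiableAt
  have key1 : 0 ≤ f1 x := by
    rcases le_total 0 x with h | h
    · have hmono : MonotoneOn f1 (Set.Icc 0 (Real.log 6)) := by
        apply monotoneOn_of_deriv_nonneg (convex_Icc _ _) hc1.continuousOn
        · exact fun y _ => (hdiff1 y).differentiableWithinAt
        · intro y hy
          rw [interior_Icc] at hy
          rw [hd1]
          have h1 : 1 ≤ Real.exp y := Real.one_le_exp hy.1.le
          nlinarith [hy.1.le]
      have h0 : f1 0 = 0 := by simp [hf1]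
      have := hmono (Set.mem_Icc.mpr ⟨le_refl 0, hlog⟩) (Set.mem_Icc.mpr ⟨h, hxr⟩) h
      linarith [this, h0.symm ▸ this]
    · have hanti : AntitoneOn f1 (Set.Icc (-Real.log 6) 0) := by
        apply antitoneOn_of_deriv_nonpos (convex_Icc _ _) hc1.continuousOn
        · exact fun y _ => (hdiff1 y).differentiableWithinAt
        · intro y hy
          rw [interior_Icc] at hy
          rw [hd1]
          have h6 : (1:ℝ) / 6 ≤ Real.exp y := by
            rw [← exp_neg_log6]
            exact Real.exp_le_exp.mpr hy.1.le
          have := mul_le_mul_of_nonpos_left h6 hy.2.le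
          linarith
      have h0 : f1 0 = 0 := by simp [hf1]
      have := hanti (Set.mem_Icc.mpr ⟨hxl, h⟩) (Set.mem_Icc.mpr ⟨neg_nonpos.mpr hlog, le_refl 0⟩) h
      linarith
  have key2 : 0 ≤ f2 x := by
    rcases le_total 0 x with h | h
    · have hmono : MonotoneOn f2 (Set.Icc 0 (Real.log 6)) := by
        apply monotoneOn_of_deriv_nonneg (convex_Icc _ _) hc2.continuousOn
        · exact fun y _ => (hdiff2 y).differentiableWithinAt
        · intro y hy
          rw [interior_Icc] at hy
          rw [hd2]
          have h6 : Real.exp y ≤ 6 := by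
            calc Real.exp y ≤ Real.exp (Real.log 6) := Real.exp_le_exp.mpr hy.2.le
            _ = 6 := Real.exp_log (by norm_num)
          nlinarith [hy.1.le]
      have h0 : f2 0 = 0 := by simp [hf2]
      have := hmono (Set.mem_Icc.mpr ⟨le_refl 0, hlog⟩) (Set.mem_Icc.mpr ⟨h, hxr⟩) h
      linarith
    · have hanti : AntitoneOn f2 (Set.Icc (-Real.log 6) 0) := by
        apply antitoneOn_of_deriv_nonpos (convex_Icc _ _) hc2.continuousOn
        · exact fun y _ => (hdiff2 y).differentiableWithinAt
        · intro y hy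
          rw [interior_Icc] at hy
          rw [hd2]
          have h6 : Real.exp y ≤ 6 := by
            calc Real.exp y ≤ Real.exp 0 := Real.exp_le_exp.mpr hy.2.le
            _ = 1 := Real.exp_zero
            _ ≤ 6 := by norm_num
          nlinarith [hy.2.le]
      have h0 : f2 0 = 0 := by simp [hf2]
      have := hanti (Set.mem_Icc.mpr ⟨hxl, h⟩) (Set.mem_Icc.mpr ⟨neg_nonpos.mpr hlog, le_refl 0⟩) h
      linarith
  constructor
  · have := key1; simp only [hf1] at this; linarith
  · have := key2; simp only [hf2] at this; linarith
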